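/- Let b, r, t ∈ ℝ with r ≠ 0 and b² = (3 + t) r, and let D be the Type B connection on U = {(x¹,x²) ∈ ℝ² : x¹ > 0} with Christoffel symbols Γ¹_{11} = t/x¹, Γ¹_{12} = Γ¹_{21} = b/x¹, Γ¹_{22} = r/x¹, Γ²_{11} = (−b³/r² − b/r)/x¹, Γ²_{12} = Γ²_{21} = ½(t − 1 − 3b²/r)/x¹, Γ²_{22} = −b/x¹. Then the symmetrized Ricci tensor of D is ρ^{sym}_{11} = −(2/(x¹)²) b²/r, ρ^{sym}_{12} = ρ^{sym}_{21} = −(2/(x¹)²) b, ρ^{sym}_{22} = −(2/(x¹)²) r. -/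

import Mathlib

noncomputable section

/-- Points of the affine surface (local coordinates `(x¹,x²)`). -/
abbrev Pt2 := Fin 2 → ℝ

/-- Partial derivative `∂_{x^i}`. -/
def pd2 (i : Fin 2) (f : Pt2 → ℝ) (p : Pt2) : ℝ :=
  fderiv ℝ f p (Pi.single i 1)

/-- The Ricci tensor `ρ_{ij}` of the affine connection with Christoffel symbols `Γ^k_{ij}`:
`ρ_{ij} = Σ_k ∂_{x^k}Γ^k_{ij} − ∂_{x^i}(Σ_k Γ^k_{kj}) + Σ_{k,l}(Γ^k_{kl}Γ^l_{ij} − Γ^k_{il}Γ^l_{kj})`. -/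
def ricciD (Γ : Fin 2 → Fin 2 → Fin 2 → Pt2 → ℝ) (i j : Fin 2) (p : Pt2) : ℝ :=
  (∑ k : Fin 2, pd2 k (Γ k i j) p) - pd2 i (fun q => ∑ k : Fin 2, Γ k k j q) p
    + ∑ k : Fin 2, ∑ l : Fin 2, (Γ k k l p * Γ l i j p - Γ k i l p * Γ l k j p)

/-- The symmetric part `ρ^{sym}_{ij} = ½(ρ_{ij}+ρ_{ji})` of the Ricci tensor. -/
def ricciDSym (Γ : Fin 2 → Fin 2 → Fin 2 → Pt2 → ℝ) (i j : Fin 2) (p : Pt2) : ℝ :=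
  (ricciD Γ i j p + ricciD Γ j i p) / 2

/-- The affine Hessian `Hes_h(∂_i,∂_j) = ∂_i∂_j h − Σ_k Γ^k_{ij} ∂_k h`. -/
def hessD (Γ : Fin 2 → Fin 2 → Fin 2 → Pt2 → ℝ) (h : Pt2 → ℝ) (i j : Fin 2) (p : Pt2) : ℝ :=
  pd2 i (pd2 j h) p - ∑ k : Fin 2, Γ k i j p * pd2 k h p

/-- The covariant derivative of the Ricci tensor:
`(D_{∂_i}ρ)_{jk} = ∂_i ρ_{jk} − Σ_l Γ^l_{ij} ρ_{lk} − Σ_l Γ^l_{ik} ρ_{jl}`. -/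
def covRicciD (Γ : Fin 2 → Fin 2 → Fin 2 → Pt2 → ℝ) (i j k : Fin 2) (p : Pt2) : ℝ :=
  pd2 i (fun q => ricciD Γ j k q) p - (∑ l : Fin 2, Γ l i j p * ricciD Γ l k p)
    - ∑ l : Fin 2, Γ l i k p * ricciD Γ j l p

/-- The projectively flat Type B connection of class (ii):
`Γ¹_{11} = t/x¹`, `Γ¹_{12} = Γ¹_{21} = b/x¹`, `Γ¹_{22} = r/x¹`,
`Γ²_{11} = (−b³/r² − b/r)/x¹`, `Γ²_{12} = Γ²_{21} = ½(t − 1 − 3b²/r)/x¹`,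
`Γ²_{22} = −b/x¹`. -/
def ΓB2 (b r t : ℝ) : Fin 2 → Fin 2 → Fin 2 → Pt2 → ℝ := fun k i j x =>
  if k = 0 ∧ i = 0 ∧ j = 0 then t / x 0
  else if k = 0 ∧ ((i = 0 ∧ j = 1) ∨ (i = 1 ∧ j = 0)) then b / x 0
  else if k = 0 ∧ i = 1 ∧ j = 1 then r / x 0
  else if k = 1 ∧ i = 0 ∧ j = 0 then (-(b ^ 3 / r ^ 2) - b / r) / x 0
  else if k = 1 ∧ ((i = 0 ∧ j = 1) ∨ (i = 1 ∧ j = 0)) then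
    (1 / 2) * (t - 1 - 3 * b ^ 2 / r) / x 0
  else if k = 1 ∧ i = 1 ∧ j = 1 then -b / x 0
  else 0

/-! Every Christoffel symbol of a Type B connection is a constant multiple of `1/x¹`, so every
term of `ρ_{ij}` is a constant multiple of `1/(x¹)²`; the claim reduces to an identity between the
constants, which holds once `t = b²/r − 3` is substituted. -/

def typeB (c : Fin 2 → Fin 2 → Fin 2 → ℝ) : Fin 2 → Fin 2 → Fin 2 → Pt2 → ℝ :=
  fun k i j x => c k i j / x 0

def ricciCoeffB (c : Fin 2 → Fin 2 → Fin 2 → ℝ) (i j : Fin 2) : ℝ :=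
  -c 0 i j + (if i = 0 then ∑ k : Fin 2, c k k j else 0)
    + ∑ k : Fin 2, ∑ l : Fin 2, (c k k l * c l i j - c k i l * c l k j)

lemma pd2_const_div (c : ℝ) (i : Fin 2) {p : Pt2} (hp : p 0 ≠ 0) :
    pd2 i (fun q => c / q 0) p = if i = 0 then -c / p 0 ^ 2 else 0 := by
  have hderiv : HasFDerivAt (fun q : Pt2 => c / q 0)
      (c • -(p 0 ^ 2)⁻¹ • ContinuousLinearMap.proj 0 : Pt2 →L[ℝ] ℝ) p :=
    ((hasDerivAt_inv hp).comp_hasFDerivAt p (hasFDerivAt_apply (𝕜 := ℝ) 0 p)).const_mul c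
  rw [pd2, hderiv.fderiv]
  fin_cases i <;> simp [div_eq_mul_inv]

lemma ricciD_typeB (c : Fin 2 → Fin 2 → Fin 2 → ℝ) (i j : Fin 2) {p : Pt2} (hp : p 0 ≠ 0) :
    ricciD (typeB c) i j p = ricciCoeffB c i j / p 0 ^ 2 := by
  have htrace : (fun q : Pt2 => ∑ k : Fin 2, typeB c k k j q)
      = fun q => (∑ k : Fin 2, c k k j) / q 0 := by
    funext q
    simp only [typeB, Finset.sum_div]
  have hsymbol : ∀ k i j, typeB c k i j = fun q => c k i j / q 0 := fun _ _ _ => rfl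
  rw [ricciD, htrace, pd2_const_div _ _ hp]
  simp only [Fin.sum_univ_two, hsymbol, pd2_const_div _ _ hp, ricciCoeffB, one_ne_zero, reduceIte]
  split_ifs <;> field_simp <;> ring

lemma ricciDSym_typeB (c : Fin 2 → Fin 2 → Fin 2 → ℝ) (i j : Fin 2) {p : Pt2} (hp : p 0 ≠ 0) :
    ricciDSym (typeB c) i j p = (ricciCoeffB c i j + ricciCoeffB c j i) / 2 / p 0 ^ 2 := by
  rw [ricciDSym, ricciD_typeB c i j hp, ricciD_typeB c j i hp]
  ring

lemma ΓB2_eq_typeB (b r t : ℝ) :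
    ΓB2 b r t = typeB ![![![t, b], ![b, r]],
      ![![-(b ^ 3 / r ^ 2) - b / r, (1 / 2) * (t - 1 - 3 * b ^ 2 / r)],
        ![(1 / 2) * (t - 1 - 3 * b ^ 2 / r), -b]]] := by
  funext k i j x
  fin_cases k <;> fin_cases i <;> fin_cases j <;> simp [ΓB2, typeB]

/-- For the class (ii) Type B connection with `r ≠ 0` and `b² = (3+t)r`,
the symmetrized Ricci tensor is
`ρ^{sym}_{11} = −(2/(x¹)²) b²/r`, `ρ^{sym}_{12} = ρ^{sym}_{21} = −(2/(x¹)²) b`,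
`ρ^{sym}_{22} = −(2/(x¹)²) r`. -/
theorem stmt12 (b r t : ℝ) (hr : r ≠ 0) (hdeg : b ^ 2 = (3 + t) * r) :
    ∀ x : Pt2, 0 < x 0 →
      ricciDSym (ΓB2 b r t) 0 0 x = -(2 / (x 0) ^ 2) * (b ^ 2 / r) ∧
      ricciDSym (ΓB2 b r t) 0 1 x = -(2 / (x 0) ^ 2) * b ∧
      ricciDSym (ΓB2 b r t) 1 0 x = -(2 / (x 0) ^ 2) * b ∧
      ricciDSym (ΓB2 b r t) 1 1 x = -(2 / (x 0) ^ 2) * r := by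
  intro x hx
  obtain rfl : t = b ^ 2 / r - 3 := by
    field_simp
    linear_combination -hdeg
  simp only [ΓB2_eq_typeB, ricciDSym_typeB _ _ _ hx.ne', ricciCoeffB, Fin.sum_univ_two,
    Matrix.cons_val_zero, Matrix.cons_val_one, Matrix.cons_val_fin_one, one_ne_zero, reduceIte]
  refine ⟨?_, ?_, ?_, ?_⟩ <;> field_simp <;> ring

end
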